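/- Let μ be a probability measure on the sphere S^{n−1} satisfying the ACW(θ, α) condition for some α > 0 and some acute angle θ > 0, and let P = P_μ be the generalized Kaczmarz projection with respect to μ. Then for any x, z ∈ ℝⁿ such that the angle between them is less than θ, E‖Pz − x‖₂² ≤ (1 − α/n)·‖z − x‖₂². -/

import Mathlib

open MeasureTheory ProbabilityTheory
open scoped RealInnerProductSpace ENNReal BigOperators

noncomputable section

/-- `ℝⁿ` with the Euclidean structure. -/
abbrev Euc (n : ℕ) := EuclideanSpace ℝ (Fin n)

/-- The sign function used in the paper: `sgn t = 1` if `t ≥ 0` and `-1` otherwise. -/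
def sgn (t : ℝ) : ℝ := if 0 ≤ t then 1 else -1

/-- One (generalized) Kaczmarz step for phase retrieval with signal `x`,
measurement vector `a`, applied to the current iterate `z`:
`Pz = z + (sign(⟨a,z⟩)·|⟨a,x⟩| − ⟨a,z⟩) a`. -/
def kacStep {n : ℕ} (x a z : Euc n) : Euc n :=
  z + (sgn ⟪a, z⟫ * |⟪a, x⟫| - ⟪a, z⟫) • a

/-- The randomized Kaczmarz iterates `X_k = P_k ⋯ P_1 x₀`, where step `k+1`
uses the measurement vector `a k`. -/
def kacIter {n : ℕ} (x : Euc n) (a : ℕ → Euc n) (x0 : Euc n) : ℕ → Euc n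
  | 0 => x0
  | k + 1 => kacStep x (a k) (kacIter x a x0 k)

/-- The spherical wedge `W_{x,z}`: points of the unit sphere where the signs of
`⟨v,x⟩` and `⟨v,z⟩` disagree. -/
def wedge {n : ℕ} (x z : Euc n) : Set (Euc n) :=
  {v | v ∈ Metric.sphere (0 : Euc n) 1 ∧ sgn ⟪v, x⟫ ≠ sgn ⟪v, z⟫}

/-- The matrix `E_{a∼μ}[a aᵀ]`. -/
def covMat {n : ℕ} (μ : Measure (Euc n)) : Matrix (Fin n) (Fin n) ℝ :=
  Matrix.of fun i j => ∫ a, a i * a j ∂μ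

/-- The matrix `E_{a∼μ}[a aᵀ 1_W(a)]`. -/
def covMatOn {n : ℕ} (μ : Measure (Euc n)) (W : Set (Euc n)) : Matrix (Fin n) (Fin n) ℝ :=
  Matrix.of fun i j => ∫ a in W, a i * a j ∂μ

/-- The quadratic form `vᵀ M v` of a matrix. -/
def quadForm {n : ℕ} (M : Matrix (Fin n) (Fin n) ℝ) (v : Euc n) : ℝ :=
  ∑ i, ∑ j, v i * M i j * v j

/-- The smallest eigenvalue of a symmetric matrix, via the Rayleigh quotient
characterization `λ_min(M) = inf_{‖v‖=1} vᵀMv`. -/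
def lamMin {n : ℕ} (M : Matrix (Fin n) (Fin n) ℝ) : ℝ :=
  ⨅ v : {v : Euc n // ‖v‖ = 1}, quadForm M (v : Euc n)

/-- The largest eigenvalue of a symmetric matrix, via the Rayleigh quotient
characterization `λ_max(M) = sup_{‖v‖=1} vᵀMv`. -/
def lamMax {n : ℕ} (M : Matrix (Fin n) (Fin n) ℝ) : ℝ :=
  ⨆ v : {v : Euc n // ‖v‖ = 1}, quadForm M (v : Euc n)

/-- The uniform probability measure on the unit sphere `S^{n-1} ⊂ ℝⁿ`:
the normalized `(n-1)`-dimensional Hausdorff measure on the sphere. -/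
def sphereUniform (n : ℕ) : Measure (Euc n) :=
  (μH[(n : ℝ) - 1] (Metric.sphere (0 : Euc n) 1))⁻¹ •
    (μH[(n : ℝ) - 1]).restrict (Metric.sphere (0 : Euc n) 1)

/-- The `ACW(θ, α)` (anti-concentration on wedges) condition: for every wedge `W`
of angle less than `θ`, `λ_min(E[aaᵀ] − 4 E[aaᵀ 1_W(a)]) ≥ α/n`. -/
def ACW {n : ℕ} (μ : Measure (Euc n)) (θ α : ℝ) : Prop :=
  ∀ x z : Euc n, x ≠ 0 → z ≠ 0 → InnerProductGeometry.angle x z < θ →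
    lamMin (covMat μ - (4 : ℝ) • covMatOn μ (wedge x z)) ≥ α / n

/-- The hitting time `τ = min{k : X_k ∉ B}` (equal to `⊤ = ∞` if the trajectory
never leaves `B`). -/
def hitTime {n : ℕ} (B : Set (Euc n)) (X : ℕ → Euc n) : ℕ∞ :=
  ⨅ j ∈ {j : ℕ | X j ∉ B}, (j : ℕ∞)

/-- The stopped iterate `X_{τ ∧ k}` where `τ = hitTime B`. -/
def stoppedIter {n : ℕ} (x : Euc n) (a : ℕ → Euc n) (x0 : Euc n) (B : Set (Euc n)) (k : ℕ) :
    Euc n :=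
  kacIter x a x0 (min (hitTime B (kacIter x a x0)) (k : ℕ∞)).toNat

/-- The filtration `(F_k)` where `F_k = σ(a_0, …, a_{k-1})` is generated by the
first `k` measurement vectors. -/
def measFiltration {Ω : Type*} {mΩ : MeasurableSpace Ω} {n : ℕ}
    (A : ℕ → Ω → Euc n) (hA : ∀ i, Measurable (A i)) : Filtration ℕ mΩ where
  seq k := ⨆ j ∈ Set.Iio k, MeasurableSpace.comap (A j) inferInstance
  mono' _ _ hij := biSup_mono fun _ ha => lt_of_lt_of_le ha hij
  le' _ := iSup₂_le fun j _ => measurable_iff_comap_le.mp (hA j)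

/-- The set `S_τ` of `{0,1}`-vectors of length `m` with at most `τ·m` ones. -/
def selVecs (m : ℕ) (τ : ℝ) : Set (Fin m → ℝ) :=
  {s | (∀ i, s i = 0 ∨ s i = 1) ∧ ∑ i, s i ≤ τ * m}

/-- The Euclidean unit ball `B₂ⁿ ⊂ ℝⁿ`. -/
def unitBall (n : ℕ) : Set (Euc n) :=
  {v | ‖v‖ ≤ 1}

/-- A process `(Y_t)_{t ∈ T}` has *mixed tail increments* with respect to a pair of
metrics `(d₁, d₂)`: there are constants `c, C > 0` with
`P(|Y_s − Y_t| ≥ c(√u d₂(s,t) + u d₁(s,t))) ≤ C e^{−u}` for all `s,t,u`. -/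
def HasMixedTailIncrements {Ω T : Type*} [MeasurableSpace Ω] (P : Measure Ω)
    (Y : T → Ω → ℝ) (d₁ d₂ : T → T → ℝ) : Prop :=
  ∃ c C : ℝ, 0 < c ∧ 0 < C ∧ ∀ s t : T, ∀ u : ℝ, 0 < u →
    P {ω | c * (Real.sqrt u * d₂ s t + u * d₁ s t) ≤ |Y s ω - Y t ω|} ≤
      ENNReal.ofReal (C * Real.exp (-u))

/-- An admissible sequence of subsets: `|T₀| = 1` and `|T_k| ≤ 2^(2^k)` for `k ≥ 1`
(the sets are taken nonempty so that distances to them are meaningful). -/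
def Admissible {T : Type*} (Ts : ℕ → Finset T) : Prop :=
  (Ts 0).card = 1 ∧ (∀ k, 1 ≤ k → (Ts k).card ≤ 2 ^ 2 ^ k) ∧ ∀ k, (Ts k).Nonempty

/-- The distance from a point to a finite set, for an abstract metric `d`. -/
def distToFinset {T : Type*} (d : T → T → ℝ) (t : T) (S : Finset T) : ℝ :=
  sInf ((fun u => d t u) '' (S : Set T))

/-- Talagrand's `γ_α` functional of a metric space `(T, d)` (here `T` is a type and
`d` an abstract metric on it): `γ_α(T,d) = inf_{(T_k)} sup_t Σ_k 2^{k/α} d(t, T_k)`,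
the infimum being over admissible sequences. -/
def gammaFunctional {T : Type*} (α : ℝ) (d : T → T → ℝ) : ℝ :=
  ⨅ Ts : {Ts : ℕ → Finset T // Admissible Ts},
    ⨆ t : T, ∑' k : ℕ, (2 : ℝ) ^ ((k : ℝ) / α) * distToFinset d t ((Ts : ℕ → Finset T) k)

end

/-!
Outside the wedge `W = W_{x,z}` the step `Pz` is the orthogonal projection of `z` onto the
hyperplane `⟪a, ·⟫ = ⟪a, x⟫`, so `‖Pz - x‖² = ‖z - x‖² - ⟪a, z - x⟫²`; inside `W` it projects
onto `⟪a, ·⟫ = -⟪a, x⟫`, which costs an extra `4⟪a, x⟫² ≤ 4⟪a, z - x⟫²` because `⟪a, x⟫` and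
`⟪a, z⟫` have opposite signs there. Taking expectations,
`E‖Pz - x‖² ≤ ‖v‖² - vᵀ(E[aaᵀ] - 4 E[aaᵀ1_W])v` with `v = z - x`, and the ACW condition bounds
this quadratic form below by `(α/n)‖v‖²` through the Rayleigh quotient.
-/

namespace Kaczmarz

lemma ne_zero_of_angle_lt_pi_div_two {V : Type*} [NormedAddCommGroup V]
    [InnerProductSpace ℝ V] {x z : V} (h : InnerProductGeometry.angle x z < Real.pi / 2) :
    x ≠ 0 ∧ z ≠ 0 := by
  constructor <;> rintro rfl
  · simp [InnerProductGeometry.angle_zero_left] at h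
  · simp [InnerProductGeometry.angle_zero_right] at h

lemma sgn_mul_abs (t : ℝ) : sgn t * |t| = t := by
  unfold sgn
  split_ifs with h
  · rw [abs_of_nonneg h, one_mul]
  · rw [abs_of_neg (not_le.1 h), neg_one_mul, neg_neg]

lemma sgn_eq_neg_of_ne {s t : ℝ} (h : sgn s ≠ sgn t) : sgn t = -sgn s := by
  unfold sgn at *
  split_ifs at * <;> norm_num at *

lemma measurable_sgn : Measurable sgn :=
  Measurable.ite measurableSet_Ici measurable_const measurable_const

lemma measurableSet_wedge {n : ℕ} (x z : Euc n) : MeasurableSet (wedge x z) := by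
  have hsgn (y : Euc n) : Measurable fun v : Euc n => sgn ⟪v, y⟫ :=
    measurable_sgn.comp (continuous_id.inner continuous_const).measurable
  exact Metric.isClosed_sphere.measurableSet.inter
    (measurableSet_eq_fun (hsgn x) (hsgn z)).compl

lemma sq_inner_le_of_mem_wedge {n : ℕ} {x z a : Euc n} (ha : a ∈ wedge x z) :
    ⟪a, x⟫ ^ 2 ≤ ⟪a, z - x⟫ ^ 2 := by
  have hsgn := ha.2
  rw [inner_sub_right]
  unfold sgn at hsgn
  split_ifs at hsgn <;> first | exact absurd rfl hsgn | nlinarith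

lemma norm_kacStep_sub_sq {n : ℕ} (x z : Euc n) {a : Euc n} (ha : ‖a‖ = 1) :
    ‖kacStep x a z - x‖ ^ 2 =
      ‖z - x‖ ^ 2 - ⟪a, z - x⟫ ^ 2 + 4 * (wedge x z).indicator (fun v => ⟪v, x⟫ ^ 2) a := by
  set c := sgn ⟪a, z⟫ * |⟪a, x⟫| - ⟪a, z⟫ with hc_def
  have hstep : kacStep x a z - x = (z - x) + c • a := by
    unfold kacStep; abel
  have hexpand : ‖kacStep x a z - x‖ ^ 2 = ‖z - x‖ ^ 2 + 2 * c * ⟪a, z - x⟫ + c ^ 2 := by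
    rw [hstep, norm_add_sq_real, real_inner_smul_right, norm_smul, ha, Real.norm_eq_abs,
      mul_one, sq_abs, real_inner_comm]
    ring
  rw [hexpand, inner_sub_right]
  by_cases hW : a ∈ wedge x z
  · have hc : c = -⟪a, x⟫ - ⟪a, z⟫ := by
      rw [hc_def, sgn_eq_neg_of_ne hW.2, neg_mul, sgn_mul_abs]
    rw [Set.indicator_of_mem hW, hc]
    ring
  · have hsgn : sgn ⟪a, x⟫ = sgn ⟪a, z⟫ :=
      not_not.1 fun h => hW ⟨mem_sphere_zero_iff_norm.2 ha, h⟩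
    have hc : c = ⟪a, x⟫ - ⟪a, z⟫ := by rw [hc_def, ← hsgn, sgn_mul_abs]
    rw [Set.indicator_of_notMem hW, hc]
    ring

lemma norm_kacStep_sub_sq_le {n : ℕ} (x z : Euc n) {a : Euc n} (ha : ‖a‖ = 1) :
    ‖kacStep x a z - x‖ ^ 2 ≤ ‖z - x‖ ^ 2 -
      (⟪a, z - x⟫ ^ 2 - 4 * (wedge x z).indicator (fun v => ⟪v, z - x⟫ ^ 2) a) := by
  rw [norm_kacStep_sub_sq x z ha]
  by_cases hW : a ∈ wedge x z
  · simp only [Set.indicator_of_mem hW]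
    linarith [sq_inner_le_of_mem_wedge hW]
  · simp only [Set.indicator_of_notMem hW]
    linarith

section QuadForm

variable {n : ℕ}

lemma quadForm_sub (A B : Matrix (Fin n) (Fin n) ℝ) (v : Euc n) :
    quadForm (A - B) v = quadForm A v - quadForm B v := by
  simp only [quadForm, Matrix.sub_apply, ← Finset.sum_sub_distrib, mul_sub, sub_mul]

lemma quadForm_smul_left (c : ℝ) (A : Matrix (Fin n) (Fin n) ℝ) (v : Euc n) :
    quadForm (c • A) v = c * quadForm A v := by
  simp only [quadForm, Matrix.smul_apply, smul_eq_mul, Finset.mul_sum]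
  exact Finset.sum_congr rfl fun i _ => Finset.sum_congr rfl fun j _ => by ring

lemma quadForm_smul_right (A : Matrix (Fin n) (Fin n) ℝ) (c : ℝ) (v : Euc n) :
    quadForm A (c • v) = c ^ 2 * quadForm A v := by
  simp only [quadForm, PiLp.smul_apply, smul_eq_mul, Finset.mul_sum]
  exact Finset.sum_congr rfl fun i _ => Finset.sum_congr rfl fun j _ => by ring

lemma continuous_quadForm (A : Matrix (Fin n) (Fin n) ℝ) : Continuous (quadForm A) := by
  unfold quadForm
  fun_prop

lemma lamMin_le_quadForm (A : Matrix (Fin n) (Fin n) ℝ) {v : Euc n} (hv : ‖v‖ = 1) :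
    lamMin A ≤ quadForm A v := by
  have hbdd : BddBelow (Set.range fun u : {u : Euc n // ‖u‖ = 1} => quadForm A u) := by
    refine ((isCompact_sphere (0 : Euc n) 1).bddBelow_image
      (continuous_quadForm A).continuousOn).mono ?_
    rintro _ ⟨⟨u, hu⟩, rfl⟩
    exact ⟨u, mem_sphere_zero_iff_norm.2 hu, rfl⟩
  exact ciInf_le hbdd ⟨v, hv⟩

lemma lamMin_mul_norm_sq_le_quadForm (A : Matrix (Fin n) (Fin n) ℝ) (v : Euc n) :
    lamMin A * ‖v‖ ^ 2 ≤ quadForm A v := by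
  rcases eq_or_ne v 0 with rfl | hv
  · simp [quadForm]
  have hunit : ‖‖v‖⁻¹ • v‖ = 1 := by
    rw [norm_smul, norm_inv, norm_norm, inv_mul_cancel₀ (norm_ne_zero_iff.2 hv)]
  have h := lamMin_le_quadForm A hunit
  rw [quadForm_smul_right, inv_pow, ← div_eq_inv_mul, le_div_iff₀ (by positivity)] at h
  exact h

end QuadForm

section SecondMoment

variable {n : ℕ} {ν : Measure (Euc n)}

lemma integrable_apply_mul_apply (hν : Integrable (fun a : Euc n => ‖a‖ ^ 2) ν) (i j : Fin n) :
    Integrable (fun a : Euc n => a i * a j) ν := by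
  refine hν.mono' (by fun_prop) (ae_of_all _ fun a => ?_)
  rw [norm_mul, sq]
  exact mul_le_mul (PiLp.norm_apply_le a i) (PiLp.norm_apply_le a j) (norm_nonneg _)
    (norm_nonneg _)

lemma integrable_inner_sq (hν : Integrable (fun a : Euc n => ‖a‖ ^ 2) ν) (w : Euc n) :
    Integrable (fun a : Euc n => ⟪a, w⟫ ^ 2) ν := by
  refine (hν.mul_const (‖w‖ ^ 2)).mono' (by fun_prop) (ae_of_all _ fun a => ?_)
  rw [norm_pow, ← mul_pow]
  exact pow_le_pow_left₀ (norm_nonneg _) (norm_inner_le_norm a w) 2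

lemma quadForm_covMat (hν : Integrable (fun a : Euc n => ‖a‖ ^ 2) ν) (w : Euc n) :
    quadForm (covMat ν) w = ∫ a, ⟪a, w⟫ ^ 2 ∂ν := by
  have hexpand (a : Euc n) : ⟪a, w⟫ ^ 2 = ∑ i, ∑ j, w i * (a i * a j) * w j := by
    simp only [PiLp.inner_apply, RCLike.inner_apply, conj_trivial, sq, Finset.sum_mul_sum]
    exact Finset.sum_congr rfl fun i _ => Finset.sum_congr rfl fun j _ => by ring
  have hint (i j : Fin n) : Integrable (fun a : Euc n => w i * (a i * a j) * w j) ν :=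
    ((integrable_apply_mul_apply hν i j).const_mul _).mul_const _
  simp_rw [hexpand]
  rw [integral_finsetSum _ fun i _ => integrable_finsetSum _ fun j _ => hint i j]
  refine Finset.sum_congr rfl fun i _ => ?_
  rw [integral_finsetSum _ fun j _ => hint i j]
  refine Finset.sum_congr rfl fun j _ => ?_
  rw [integral_mul_const, integral_const_mul]
  rfl

lemma quadForm_covMat_sub_smul_covMatOn (hν : Integrable (fun a : Euc n => ‖a‖ ^ 2) ν)
    {W : Set (Euc n)} (hW : MeasurableSet W) (c : ℝ) (w : Euc n) :
    quadForm (covMat ν - c • covMatOn ν W) w =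
      ∫ a, (⟪a, w⟫ ^ 2 - c * W.indicator (fun v => ⟪v, w⟫ ^ 2) a) ∂ν := by
  have hrestrict : covMatOn ν W = covMat (ν.restrict W) := rfl
  rw [quadForm_sub, quadForm_smul_left, hrestrict, quadForm_covMat hν,
    quadForm_covMat hν.restrict, integral_sub (integrable_inner_sq hν w)
      (((integrable_inner_sq hν w).indicator hW).const_mul c),
    integral_const_mul, integral_indicator hW]

end SecondMoment

end Kaczmarz

open Kaczmarz in
theorem expected_decrement_ACW_general {n : ℕ} (μ : Measure (Euc n)) [IsProbabilityMeasure μ]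
    (hsupp : ∀ᵐ a ∂μ, a ∈ Metric.sphere (0 : Euc n) 1)
    (θ α : ℝ) (hθ' : θ < Real.pi / 2) (hACW : ACW μ θ α)
    (x z : Euc n) (hangle : InnerProductGeometry.angle x z < θ) :
    ∫ a, ‖kacStep x a z - x‖ ^ 2 ∂μ ≤ (1 - α / n) * ‖z - x‖ ^ 2 := by
  obtain ⟨hx, hz⟩ := ne_zero_of_angle_lt_pi_div_two (hangle.trans hθ')
  have hnorm : ∀ᵐ a ∂μ, ‖a‖ = 1 := hsupp.mono fun _ => mem_sphere_zero_iff_norm.1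
  have hμ : Integrable (fun a : Euc n => ‖a‖ ^ 2) μ :=
    (integrable_const 1).congr (hnorm.mono fun a ha => by simp [ha])
  have hACW' : α / n * ‖z - x‖ ^ 2 ≤
      quadForm (covMat μ - (4 : ℝ) • covMatOn μ (wedge x z)) (z - x) :=
    (mul_le_mul_of_nonneg_right (hACW x z hx hz hangle) (sq_nonneg _)).trans
      (lamMin_mul_norm_sq_le_quadForm _ _)
  have hint : Integrable (fun a => ⟪a, z - x⟫ ^ 2 -
      4 * (wedge x z).indicator (fun v => ⟪v, z - x⟫ ^ 2) a) μ :=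
    (integrable_inner_sq hμ _).sub
      (((integrable_inner_sq hμ _).indicator (measurableSet_wedge x z)).const_mul 4)
  calc ∫ a, ‖kacStep x a z - x‖ ^ 2 ∂μ
      ≤ ∫ a, (‖z - x‖ ^ 2 - (⟪a, z - x⟫ ^ 2 -
          4 * (wedge x z).indicator (fun v => ⟪v, z - x⟫ ^ 2) a)) ∂μ :=
        integral_mono_of_nonneg (ae_of_all _ fun _ => sq_nonneg _)
          ((integrable_const _).sub hint) (hnorm.mono fun _ => norm_kacStep_sub_sq_le x z)
    _ = ‖z - x‖ ^ 2 - quadForm (covMat μ - (4 : ℝ) • covMatOn μ (wedge x z)) (z - x) := by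
        rw [integral_sub (integrable_const _) hint,
          quadForm_covMat_sub_smul_covMatOn hμ (measurableSet_wedge x z), integral_const,
          probReal_univ, one_smul]
    _ ≤ (1 - α / n) * ‖z - x‖ ^ 2 := by linarith

/-- **Lemma (Expected decrement for an ACW measure).** Let `μ` be a probability
measure on `S^{n−1}` satisfying `ACW(θ, α)` for some `α > 0` and acute angle `θ > 0`,
and let `P = P_μ` be the generalized Kaczmarz projection with respect to `μ`. Then
for any `x, z` making angle less than `θ`, `E‖Pz − x‖² ≤ (1 − α/n)‖z − x‖²`. -/
theorem expected_decrement_ACW {n : ℕ} (μ : Measure (Euc n)) [IsProbabilityMeasure μ]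
    (hsupp : ∀ᵐ a ∂μ, a ∈ Metric.sphere (0 : Euc n) 1)
    (θ α : ℝ) (hα : 0 < α) (hθ : 0 < θ) (hθ' : θ < Real.pi / 2) (hACW : ACW μ θ α)
    (x z : Euc n) (hangle : InnerProductGeometry.angle x z < θ) :
    ∫ a, ‖kacStep x a z - x‖ ^ 2 ∂μ ≤ (1 - α / n) * ‖z - x‖ ^ 2 :=
  expected_decrement_ACW_general μ hsupp θ α hθ' hACW x z hangle
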